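/- Let Y0, Y1, Y2 be independent exponential random variables with rates 1, 1/n, 1/n, let T > 0, and set Z := |n(T∧(Y0) − T∧(Y0∧Y1)) − (n/2)(T∧Y0 − T∧(Y0∧Y1∧Y2))|. Then E[Z] ≥ (T/6)·(1 − exp(−(1+2/n)T/3))·(exp(−2T/3) − exp(−T)). In particular, liminf over n of E[Z] is at least (T/6)(1 − e^{−T/3})(e^{−2T/3} − e^{−T}) > 0. -/

import Mathlib

/-!
On the event `{Y0 > 2T/3, Y1 < T/3}` one has `T∧Y0 ≥ 2T/3` and `T∧(Y0∧Y1) = Y1`, while the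
second difference is at most `T∧Y0`; hence `Z ≥ n (T/3 - Y1)` there. Independence of `Y0` and
`Y1` gives `E[Z] ≥ n E[(T/3 - Y1)⁺] P(Y0 > 2T/3) = n (T/3 - n (1 - e^{-T/(3n)})) e^{-2T/3}`, and
a Padé bound for `exp` combined with Bernoulli's inequality bounds this below by
`(T/6)(1 - e^{-T/3}) e^{-2T/3} = (T/6)(e^{-2T/3} - e^{-T})`, uniformly in `n`.
For the `liminf`, `E[Z]` must also be bounded in `n`:
`Z ≤ (3n/2)(T - Y1)⁺ + (n/2)(T - Y2)⁺`, whose mean is at most `T²`.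
-/

open MeasureTheory ProbabilityTheory Real Filter Set

lemma two_sub_le_two_add_mul_exp_neg {x : ℝ} (hx : 0 ≤ x) : 2 - x ≤ (2 + x) * exp (-x) := by
  let φ : ℝ → ℝ := fun x => (2 + x) * exp (-x) - (2 - x)
  have hφ : ∀ y, HasDerivAt φ (1 - (1 + y) * exp (-y)) y := fun y => by
    refine ((((hasDerivAt_id y).const_add 2).mul (hasDerivAt_neg y).exp).sub
      ((hasDerivAt_id y).const_sub 2)).congr_deriv ?_
    simp only [id]
    ring
  have hφ_mono : Monotone φ := monotone_of_deriv_nonneg (fun y => (hφ y).differentiableAt)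
    fun y => by
      rw [(hφ y).deriv, sub_nonneg]
      calc (1 + y) * exp (-y) ≤ exp y * exp (-y) := by gcongr; linarith [add_one_le_exp y]
        _ = 1 := by rw [← exp_add, add_neg_cancel, exp_zero]
  simpa [φ] using hφ_mono hx

lemma exp_neg_le_one_sub_add_sq_div_two {x : ℝ} (hx : 0 ≤ x) :
    exp (-x) ≤ 1 - x + x ^ 2 / 2 := by
  have h := quadratic_le_exp_of_nonneg hx
  have hinv : exp x * exp (-x) = 1 := by rw [← exp_add, add_neg_cancel, exp_zero]
  nlinarith [exp_pos (-x), sq_nonneg x, pow_two_nonneg (x ^ 2)]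

lemma one_sub_exp_neg_le_mul_one_sub_exp_neg_div {c : ℝ} (hc : 1 ≤ c) (a : ℝ) :
    1 - exp (-a) ≤ c * (1 - exp (-(a / c))) := by
  have h := one_add_mul_self_le_rpow_one_add
    (show -1 ≤ exp (-(a / c)) - 1 by linarith [exp_pos (-(a / c))]) hc
  rw [add_sub_cancel, ← exp_mul, neg_mul, div_mul_cancel₀ _ (by positivity)] at h
  linarith

lemma half_mul_one_sub_exp_neg_le {c a : ℝ} (hc : 1 ≤ c) (ha : 0 ≤ a) :
    a / 2 * (1 - exp (-a)) ≤ c * (a - c * (1 - exp (-(a / c)))) := by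
  have hc0 : 0 < c := by linarith
  obtain ⟨x, hx, rfl⟩ : ∃ x, 0 ≤ x ∧ a = c * x := ⟨a / c, by positivity, by field_simp⟩
  have hpade := two_sub_le_two_add_mul_exp_neg hx
  have hbern := one_sub_exp_neg_le_mul_one_sub_exp_neg_div hc (c * x)
  rw [mul_div_cancel_left₀ _ hc0.ne'] at hbern ⊢
  calc c * x / 2 * (1 - exp (-(c * x))) ≤ c * x / 2 * (c * (1 - exp (-x))) := by gcongr
    _ ≤ c * (c * x - c * (1 - exp (-x))) := by
      nlinarith [mul_le_mul_of_nonneg_left hpade (by positivity : 0 ≤ c * c)]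

lemma mul_sub_mul_one_sub_exp_neg_div_le {c a : ℝ} (hc : 0 < c) (ha : 0 ≤ a) :
    c * (a - c * (1 - exp (-(a / c)))) ≤ a ^ 2 / 2 := by
  obtain ⟨x, hx, rfl⟩ : ∃ x, 0 ≤ x ∧ a = c * x := ⟨a / c, by positivity, by field_simp⟩
  rw [mul_div_cancel_left₀ _ hc.ne']
  nlinarith [mul_le_mul_of_nonneg_left (exp_neg_le_one_sub_add_sq_div_two hx)
    (by positivity : 0 ≤ c * c)]

lemma expMeasure_eq_withDensity (r : ℝ) :
    expMeasure r = volume.withDensity (exponentialPDF r) := rfl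

lemma measurable_exponentialPDF (r : ℝ) : Measurable (exponentialPDF r) :=
  (measurable_exponentialPDFReal r).ennreal_ofReal

lemma ae_nonneg_expMeasure (r : ℝ) : ∀ᵐ y ∂expMeasure r, 0 ≤ y := by
  rw [expMeasure_eq_withDensity, ae_withDensity_iff (measurable_exponentialPDF r)]
  filter_upwards with y hy
  by_contra hneg
  exact hy (exponentialPDF_of_neg (not_le.mp hneg))

lemma expMeasure_real_Ioi {r x : ℝ} (hr : 0 < r) (hx : 0 ≤ x) :
    (expMeasure r).real (Ioi x) = exp (-(r * x)) := by
  have := isProbabilityMeasure_expMeasure hr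
  rw [← compl_Iic, probReal_compl_eq_one_sub measurableSet_Iic, ← cdf_eq_real,
    cdf_expMeasure_eq hr, if_pos hx, sub_sub_cancel]

lemma integral_max_sub_zero_expMeasure {r a : ℝ} (hr : 0 < r) (ha : 0 ≤ a) :
    ∫ y, max (a - y) 0 ∂expMeasure r = a - (1 - exp (-(r * a))) / r := by
  let F : ℝ → ℝ := fun y => ((1 - r * a) / r + y) * exp (-(r * y))
  have hF : ∀ y, HasDerivAt F (r * exp (-(r * y)) * (a - y)) y := fun y => by
    refine (((hasDerivAt_id y).const_add _).mul
      ((hasDerivAt_id y).const_mul r).neg.exp).congr_deriv ?_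
    simp only [id, Pi.neg_apply]
    field_simp
    ring
  have hpdf : ∀ y ∈ Icc 0 a, (exponentialPDF r y).toReal * max (a - y) 0
      = r * exp (-(r * y)) * (a - y) := fun y hy => by
    rw [exponentialPDF_of_nonneg hy.1, ENNReal.toReal_ofReal (by positivity),
      max_eq_left (sub_nonneg.mpr hy.2)]
  have hvanish : ∀ y ∉ Icc 0 a, (exponentialPDF r y).toReal * max (a - y) 0 = 0 := fun y hy => by
    rcases not_and_or.mp hy with hy | hy
    · rw [exponentialPDF_of_neg (not_le.mp hy), ENNReal.toReal_zero, zero_mul]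
    · rw [max_eq_right (by linarith [not_le.mp hy]), mul_zero]
  rw [expMeasure_eq_withDensity, integral_withDensity_eq_integral_toReal_smul
      (measurable_exponentialPDF r) (ae_of_all _ fun _ => ENNReal.ofReal_lt_top)]
  simp only [smul_eq_mul]
  rw [← setIntegral_eq_integral_of_forall_compl_eq_zero hvanish,
    setIntegral_congr_fun measurableSet_Icc hpdf, integral_Icc_eq_integral_Ioc,
    ← intervalIntegral.integral_of_le ha,
    intervalIntegral.integral_eq_sub_of_hasDerivAt (fun y _ => hF y)
      (Continuous.intervalIntegrable (by fun_prop) _ _)]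
  simp only [F, mul_zero, neg_zero, exp_zero, add_zero, mul_one]
  field_simp
  ring

noncomputable def zStat (N T y0 y1 y2 : ℝ) : ℝ :=
  |N * (min T y0 - min T (min y0 y1)) - N / 2 * (min T y0 - min T (min y0 (min y1 y2)))|

lemma min_sub_min_min_eq_max (T y0 y : ℝ) :
    min T y0 - min T (min y0 y) = max (min T y0 - y) 0 := by
  rw [← min_assoc, ← max_sub_sub_left, sub_self, max_comm]

lemma zStat_eq (N T y0 y1 y2 : ℝ) : zStat N T y0 y1 y2 =
    |N * max (min T y0 - y1) 0 - N / 2 * max (min T y0 - min y1 y2) 0| := by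
  rw [zStat, min_sub_min_min_eq_max, min_sub_min_min_eq_max]

lemma zStat_nonneg (N T y0 y1 y2 : ℝ) : 0 ≤ zStat N T y0 y1 y2 := abs_nonneg _

lemma zStat_le {N : ℝ} (hN : 0 ≤ N) (T y0 y1 y2 : ℝ) :
    zStat N T y0 y1 y2 ≤ 3 * N / 2 * max (T - y1) 0 + N / 2 * max (T - y2) 0 := by
  have hm : min T y0 ≤ T := min_le_left T y0
  have hu : max (min T y0 - y1) 0 ≤ max (T - y1) 0 := by gcongr
  have hv : max (min T y0 - min y1 y2) 0 ≤ max (T - y1) 0 + max (T - y2) 0 := by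
    rcases min_choice y1 y2 with h | h <;> rw [h]
    · linarith [max_le_max_right 0 (sub_le_sub_right hm y1), le_max_right (T - y2) 0]
    · linarith [max_le_max_right 0 (sub_le_sub_right hm y2), le_max_right (T - y1) 0]
  rw [zStat_eq]
  calc _ ≤ N * max (min T y0 - y1) 0 + N / 2 * max (min T y0 - min y1 y2) 0 := by
        refine (abs_sub _ _).trans_eq ?_
        rw [abs_of_nonneg (by positivity), abs_of_nonneg (by positivity)]
    _ ≤ N * max (T - y1) 0 + N / 2 * (max (T - y1) 0 + max (T - y2) 0) := by gcongr
    _ = _ := by ring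

lemma mul_max_sub_mul_indicator_le_zStat {N T y1 y2 : ℝ} (hN : 0 ≤ N) (hT : 0 ≤ T)
    (hy1 : 0 ≤ y1) (hy2 : 0 ≤ y2) (y0 : ℝ) :
    N * max (T / 3 - y1) 0 * (Ioi (2 * T / 3)).indicator 1 y0 ≤ zStat N T y0 y1 y2 := by
  by_cases hy0 : y0 ∈ Ioi (2 * T / 3)
  · rw [indicator_of_mem hy0, Pi.one_apply, mul_one]
    rcases le_total (T / 3) y1 with hy1' | hy1'
    · rw [max_eq_right (by linarith), mul_zero]
      exact zStat_nonneg _ _ _ _ _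
    have hm : 2 * T / 3 ≤ min T y0 := le_min (by linarith) (le_of_lt hy0)
    have hv : max (min T y0 - min y1 y2) 0 ≤ min T y0 :=
      max_le (by linarith [le_min hy1 hy2]) (by linarith)
    rw [zStat_eq, max_eq_left (by linarith), max_eq_left (by linarith)]
    refine le_trans ?_ (le_abs_self _)
    nlinarith [mul_le_mul_of_nonneg_left hv (by positivity : 0 ≤ N / 2)]
  · rw [indicator_of_notMem hy0, mul_zero]
    exact zStat_nonneg _ _ _ _ _

section RandomVariables

variable {Ω : Type*} [MeasurableSpace Ω] {μ : Measure Ω} {X X0 X1 X2 : Ω → ℝ}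

lemma ae_nonneg_of_map_eq_expMeasure {r : ℝ} (hX : AEMeasurable X μ)
    (hlaw : μ.map X = expMeasure r) : ∀ᵐ ω ∂μ, 0 ≤ X ω :=
  ae_of_ae_map hX (hlaw ▸ ae_nonneg_expMeasure r)

lemma integral_max_sub_zero_of_map_eq_expMeasure {N a : ℝ} (hN : 0 < N) (ha : 0 ≤ a)
    (hX : Measurable X) (hlaw : μ.map X = expMeasure (1 / N)) :
    ∫ ω, max (a - X ω) 0 ∂μ = a - N * (1 - exp (-(a / N))) := by
  rw [← integral_map (f := fun y => max (a - y) 0) hX.aemeasurable (by fun_prop), hlaw,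
    integral_max_sub_zero_expMeasure (by positivity) ha]
  field_simp

lemma integrable_max_sub_zero [IsFiniteMeasure μ] (hX : Measurable X) (h : ∀ᵐ ω ∂μ, 0 ≤ X ω)
    (a : ℝ) :
    Integrable (fun ω => max (a - X ω) 0) μ :=
  Integrable.of_bound (by fun_prop) |a| <| h.mono fun ω hω => by
    rw [norm_of_nonneg (le_max_right _ _)]
    exact max_le (by linarith [le_abs_self a]) (abs_nonneg a)

lemma integrable_zStat [IsFiniteMeasure μ] {N : ℝ} (hN : 0 ≤ N) (T : ℝ)
    (hX0 : Measurable X0) (hX1 : Measurable X1) (hX2 : Measurable X2) (h1 : ∀ᵐ ω ∂μ, 0 ≤ X1 ω)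
    (h2 : ∀ᵐ ω ∂μ, 0 ≤ X2 ω) :
    Integrable (fun ω => zStat N T (X0 ω) (X1 ω) (X2 ω)) μ :=
  Integrable.mono' (((integrable_max_sub_zero hX1 h1 T).const_mul _).add
      ((integrable_max_sub_zero hX2 h2 T).const_mul _))
    (by unfold zStat; fun_prop)
    (ae_of_all _ fun ω => by
      rw [norm_of_nonneg (zStat_nonneg _ _ _ _ _)]
      exact zStat_le hN T _ _ _)

lemma integral_zStat_le [IsFiniteMeasure μ] {N T : ℝ} (hN : 0 < N) (hT : 0 ≤ T)
    (hX0 : Measurable X0) (hX1 : Measurable X1) (hX2 : Measurable X2)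
    (hlaw1 : μ.map X1 = expMeasure (1 / N)) (hlaw2 : μ.map X2 = expMeasure (1 / N)) :
    ∫ ω, zStat N T (X0 ω) (X1 ω) (X2 ω) ∂μ ≤ T ^ 2 := by
  have h1 := ae_nonneg_of_map_eq_expMeasure hX1.aemeasurable hlaw1
  have h2 := ae_nonneg_of_map_eq_expMeasure hX2.aemeasurable hlaw2
  have hmean := mul_sub_mul_one_sub_exp_neg_div_le hN hT
  calc ∫ ω, zStat N T (X0 ω) (X1 ω) (X2 ω) ∂μ
      ≤ ∫ ω, (3 * N / 2 * max (T - X1 ω) 0 + N / 2 * max (T - X2 ω) 0) ∂μ :=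
        integral_mono (integrable_zStat hN.le T hX0 hX1 hX2 h1 h2)
          (((integrable_max_sub_zero hX1 h1 T).const_mul _).add
            ((integrable_max_sub_zero hX2 h2 T).const_mul _))
          fun ω => zStat_le hN.le T _ _ _
    _ = 2 * (N * (T - N * (1 - exp (-(T / N))))) := by
        rw [integral_add ((integrable_max_sub_zero hX1 h1 T).const_mul _)
            ((integrable_max_sub_zero hX2 h2 T).const_mul _), integral_const_mul,
          integral_const_mul, integral_max_sub_zero_of_map_eq_expMeasure hN hT hX1 hlaw1,
          integral_max_sub_zero_of_map_eq_expMeasure hN hT hX2 hlaw2]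
        ring
    _ ≤ T ^ 2 := by linarith

lemma le_integral_zStat [IsFiniteMeasure μ] {N T : ℝ} (hN : 1 ≤ N) (hT : 0 ≤ T)
    (hX0 : Measurable X0) (hX1 : Measurable X1) (hX2 : Measurable X2)
    (hlaw0 : μ.map X0 = expMeasure 1) (hlaw1 : μ.map X1 = expMeasure (1 / N))
    (h2 : ∀ᵐ ω ∂μ, 0 ≤ X2 ω) (hindep : IndepFun X1 X0 μ) :
    T / 6 * (exp (-(2 * T / 3)) - exp (-T)) ≤ ∫ ω, zStat N T (X0 ω) (X1 ω) (X2 ω) ∂μ := by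
  have hN0 : 0 < N := by linarith
  have h1 := ae_nonneg_of_map_eq_expMeasure hX1.aemeasurable hlaw1
  have hind0 : Measurable ((Ioi (2 * T / 3)).indicator (1 : ℝ → ℝ)) :=
    measurable_one.indicator measurableSet_Ioi
  have hP0 : ∫ ω, (Ioi (2 * T / 3)).indicator 1 (X0 ω) ∂μ = exp (-(2 * T / 3)) := by
    rw [← integral_map hX0.aemeasurable hind0.aestronglyMeasurable, hlaw0,
      integral_indicator_one measurableSet_Ioi, expMeasure_real_Ioi one_pos (by positivity),
      one_mul]
  calc T / 6 * (exp (-(2 * T / 3)) - exp (-T))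
      = T / 3 / 2 * (1 - exp (-(T / 3))) * exp (-(2 * T / 3)) := by
        rw [show -T = -(2 * T / 3) + -(T / 3) by ring, exp_add]
        ring
    _ ≤ N * (T / 3 - N * (1 - exp (-(T / 3 / N)))) * exp (-(2 * T / 3)) := by
        gcongr ?_ * _
        exact half_mul_one_sub_exp_neg_le hN (by positivity)
    _ = (∫ ω, N * max (T / 3 - X1 ω) 0 ∂μ) * ∫ ω, (Ioi (2 * T / 3)).indicator 1 (X0 ω) ∂μ := by
        rw [integral_const_mul, integral_max_sub_zero_of_map_eq_expMeasure hN0 (by positivity)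
          hX1 hlaw1, hP0]
    _ = ∫ ω, N * max (T / 3 - X1 ω) 0 * (Ioi (2 * T / 3)).indicator 1 (X0 ω) ∂μ :=
        (hindep.integral_fun_comp_mul_comp (f := fun y => N * max (T / 3 - y) 0)
          hX1.aemeasurable hX0.aemeasurable (by fun_prop) hind0.aestronglyMeasurable).symm
    _ ≤ ∫ ω, zStat N T (X0 ω) (X1 ω) (X2 ω) ∂μ := by
        refine integral_mono_of_nonneg (ae_of_all _ fun ω => ?_)
          (integrable_zStat hN0.le T hX0 hX1 hX2 h1 h2) ?_
        · exact mul_nonneg (by positivity) (indicator_nonneg (fun _ _ => zero_le_one) _)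
        · filter_upwards [h1, h2] with ω hω1 hω2
          exact mul_max_sub_mul_indicator_le_zStat hN0.le hT hω1 hω2 _

end RandomVariables

/-- For each `n`, let `Y0 n, Y1 n, Y2 n` be independent exponential random variables with rates
`1, 1/n, 1/n` and let
`Z n = |n (T∧Y0 − T∧(Y0∧Y1)) − (n/2) (T∧Y0 − T∧(Y0∧Y1∧Y2))|`.
Then `E[Z n]` is bounded below by the explicit constant, the liminf of `E[Z n]` over `n` is at
least `(T/6)(1 − e^{−T/3})(e^{−2T/3} − e^{−T})`, and this lower bound is positive. -/
theorem stmt1 {Ω : Type*} [MeasureSpace Ω] [IsProbabilityMeasure (ℙ : Measure Ω)]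
    (T : ℝ) (hT : 0 < T)
    (Y0 Y1 Y2 : ℕ → Ω → ℝ)
    (hm0 : ∀ n, Measurable (Y0 n)) (hm1 : ∀ n, Measurable (Y1 n))
    (hm2 : ∀ n, Measurable (Y2 n))
    (law0 : ∀ n, 1 ≤ n → Measure.map (Y0 n) ℙ = expMeasure 1)
    (law1 : ∀ n, 1 ≤ n → Measure.map (Y1 n) ℙ = expMeasure (1 / (n : ℝ)))
    (law2 : ∀ n, 1 ≤ n → Measure.map (Y2 n) ℙ = expMeasure (1 / (n : ℝ)))
    (hind : ∀ n, 1 ≤ n →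
      iIndepFun
        ![Y0 n, Y1 n, Y2 n] ℙ)
    (Z : ℕ → Ω → ℝ)
    (hZ : ∀ n ω, Z n ω =
      |(n : ℝ) * (min T (Y0 n ω) - min T (min (Y0 n ω) (Y1 n ω)))
        - ((n : ℝ) / 2) * (min T (Y0 n ω)
            - min T (min (Y0 n ω) (min (Y1 n ω) (Y2 n ω))))|) :
    (∀ n : ℕ, 1 ≤ n →
      (T / 6) * (1 - exp (-(1 + 2 / (n : ℝ)) * (T / 3)))
          * (exp (-(2 * T / 3)) - exp (-T))
        ≤ ∫ ω, Z n ω ∂ℙ)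
    ∧ (T / 6) * (1 - exp (-(T / 3))) * (exp (-(2 * T / 3)) - exp (-T))
        ≤ liminf (fun n => ∫ ω, Z n ω ∂ℙ) atTop
    ∧ 0 < (T / 6) * (1 - exp (-(T / 3))) * (exp (-(2 * T / 3)) - exp (-T)) := by
  have hZ' : ∀ n, Z n = fun ω => zStat n T (Y0 n ω) (Y1 n ω) (Y2 n ω) := fun n => funext (hZ n)
  have hgap : 0 < exp (-(2 * T / 3)) - exp (-T) := sub_pos.mpr (exp_lt_exp.mpr (by linarith))
  have hlower : ∀ n : ℕ, 1 ≤ n → T / 6 * (exp (-(2 * T / 3)) - exp (-T)) ≤ ∫ ω, Z n ω ∂ℙ :=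
    fun n hn => by
      have hn' : (1 : ℝ) ≤ n := by exact_mod_cast hn
      have hindep : IndepFun (Y1 n) (Y0 n) ℙ := by
        simpa using (hind n hn).indepFun (show (1 : Fin 3) ≠ 0 by decide)
      rw [hZ']
      exact le_integral_zStat hn' hT.le (hm0 n) (hm1 n) (hm2 n) (law0 n hn) (law1 n hn)
        (ae_nonneg_of_map_eq_expMeasure (hm2 n).aemeasurable (law2 n hn)) hindep
  have hupper : ∀ n : ℕ, 1 ≤ n → ∫ ω, Z n ω ∂ℙ ≤ T ^ 2 := fun n hn => by
    rw [hZ']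
    exact integral_zStat_le (by exact_mod_cast hn) hT.le (hm0 n) (hm1 n) (hm2 n) (law1 n hn)
      (law2 n hn)
  have hfactor : ∀ s : ℝ, T / 6 * (1 - exp s) * (exp (-(2 * T / 3)) - exp (-T))
      ≤ T / 6 * (exp (-(2 * T / 3)) - exp (-T)) := fun s => by
    nlinarith [exp_pos s, mul_pos hT hgap]
  refine ⟨fun n hn => (hfactor _).trans (hlower n hn), ?_, ?_⟩
  · refine le_liminf_of_le ?_ ((eventually_ge_atTop 1).mono fun n hn =>
      (hfactor _).trans (hlower n hn))
    exact isCoboundedUnder_ge_of_eventually_le atTop ((eventually_ge_atTop 1).mono hupper)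
  · have : 0 < 1 - exp (-(T / 3)) := sub_pos.mpr (exp_lt_one_iff.mpr (by linarith))
    positivity
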